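/- Images and kernels under 2p-morphisms (compact case). Let X₁,…,X_d and Y₁,…,Y_d be commuting essentially normal tuples of bounded operators on complex Hilbert spaces H and K respectively, with X₁H + ⋯ + X_dH closed of finite codimension in H and Y₁K + ⋯ + Y_dK closed of finite codimension in K. Let L : H → K be a bounded operator with LX_k = Y_kL for all k and with L*Y_k − X_kL* compact for all k. Let M ⊆ H be a closed subspace with X_kM ⊆ M for all k, such that L(M) is a closed subspace of K and the restricted tuple (X_k|_M) is essentially normal. Then: (a) L(M) is invariant under every Y_k and the restricted tuple (Y_k|_{L(M)}) is essentially normal; (b) M ∩ ker L is invariant under every X_k and the restricted tuple on M ∩ ker L is essentially normal; (c) the restriction L₀ = L|_M satisfies: P_M L* Y_k − X_k P_M L* is a compact operator from K to H for every k, where P_M is the orthogonal projection onto M. -/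

import Mathlib

set_option synthInstance.maxHeartbeats 1000000
set_option maxHeartbeats 1000000

open ContinuousLinearMap

/-- The restriction of a continuous linear operator to an invariant submodule. -/
noncomputable def clmRestrict {E : Type*} [NormedAddCommGroup E] [InnerProductSpace ℂ E]
    [CompleteSpace E] (T : E →L[ℂ] E) (U : Submodule ℂ E)
    (h : ∀ x ∈ U, T x ∈ U) : U →L[ℂ] U :=
  { toLinearMap := (T : E →ₗ[ℂ] E).restrict h
    cont := Continuous.subtype_mk (T.continuous.comp continuous_subtype_val) _ }

/-- A tuple `T` of (commuting) operators is *essentially normal* if all of the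
self-commutators `T j (T k)* − (T k)* T j` are compact. -/
def EssNormal {d : ℕ} {F : Type*} [NormedAddCommGroup F] [InnerProductSpace ℂ F]
    [CompleteSpace F] (T : Fin d → F →L[ℂ] F) : Prop :=
  ∀ j k, IsCompactOperator ⇑(T j ∘L adjoint (T k) - adjoint (T k) ∘L T j)

/-- Essential normality of the restriction of a tuple of operators to a closed
invariant subspace `U` (the Hilbert submodule `U`). -/
def EssNormalOn {E : Type*} [NormedAddCommGroup E] [InnerProductSpace ℂ E]
    [CompleteSpace E] {d : ℕ} (T : Fin d → E →L[ℂ] E) (U : Submodule ℂ E)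
    (hU : IsClosed (U : Set E)) (hinv : ∀ k, ∀ x ∈ U, T k x ∈ U) : Prop :=
  haveI : CompleteSpace U := hU.completeSpace_coe
  EssNormal (fun k => clmRestrict (T k) U (hinv k))

/-- The orthogonal projection onto a closed subspace, as an operator on the ambient space. -/
noncomputable def projOf {E : Type*} [NormedAddCommGroup E] [InnerProductSpace ℂ E]
    [CompleteSpace E] (U : Submodule ℂ E) (hU : IsClosed (U : Set E)) : E →L[ℂ] E :=
  haveI : CompleteSpace U := hU.completeSpace_coe
  U.subtypeL ∘L U.orthogonalProjectionOnto

/-- The compression of a tuple of operators to the orthogonal complement of a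
submodule `M`; this is the coordinate tuple of the quotient Hilbert module `E/M`. -/
noncomputable def compressPerp {E : Type*} [NormedAddCommGroup E] [InnerProductSpace ℂ E]
    [CompleteSpace E] {d : ℕ} (T : Fin d → E →L[ℂ] E) (M : Submodule ℂ E) :
    Fin d → ↥(Mᗮ) →L[ℂ] ↥(Mᗮ) :=
  fun k => (Mᗮ).orthogonalProjectionOnto ∘L T k ∘L (Mᗮ).subtypeL



set_option synthInstance.maxHeartbeats 1000000
set_option maxHeartbeats 1000000

open ContinuousLinearMap
open scoped InnerProductSpace

set_option linter.unusedSectionVars false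

section Toolkit

variable {E F G G' : Type*}
  [NormedAddCommGroup E] [InnerProductSpace ℂ E] [CompleteSpace E]
  [NormedAddCommGroup F] [InnerProductSpace ℂ F] [CompleteSpace F]
  [NormedAddCommGroup G] [InnerProductSpace ℂ G] [CompleteSpace G]
  [NormedAddCommGroup G'] [InnerProductSpace ℂ G'] [CompleteSpace G']

lemma cpt_compL (A : F →L[ℂ] G) {T : E →L[ℂ] F} (h : IsCompactOperator ⇑T) :
    IsCompactOperator ⇑(A ∘L T) := by
  rw [coe_comp']; exact h.continuous_comp A.continuous

lemma cpt_compR {T : F →L[ℂ] G} (h : IsCompactOperator ⇑T) (A : E →L[ℂ] F) :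
    IsCompactOperator ⇑(T ∘L A) := by
  rw [coe_comp']; exact h.comp_clm A

lemma cpt_sub {A B : E →L[ℂ] F} (h1 : IsCompactOperator ⇑A) (h2 : IsCompactOperator ⇑B) :
    IsCompactOperator ⇑(A - B) := by
  rw [coe_sub']; exact h1.sub h2

lemma cpt_add {A B : E →L[ℂ] F} (h1 : IsCompactOperator ⇑A) (h2 : IsCompactOperator ⇑B) :
    IsCompactOperator ⇑(A + B) := by
  rw [coe_add']; exact h1.add h2

lemma cpt_neg {A : E →L[ℂ] F} (h1 : IsCompactOperator ⇑A) :
    IsCompactOperator ⇑(-A) := by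
  rw [coe_neg']; exact h1.neg

/-- If `T†T` is compact then so is `T`. -/
lemma cpt_of_adjoint_comp (T : E →L[ℂ] F) (h : IsCompactOperator ⇑(adjoint T ∘L T)) :
    IsCompactOperator ⇑T := by
  classical
  have key : TotallyBounded (⇑T '' Metric.closedBall 0 1) := by
    rw [Metric.totallyBounded_iff]
    intro ε hε
    have hS : TotallyBounded (⇑(adjoint T ∘L T) '' Metric.closedBall 0 1) := by
      have h' : IsCompactOperator ⇑((adjoint T ∘L T : E →L[ℂ] E) : E →ₗ[ℂ] E) := by
        exact h
      have hc := h'.isCompact_closure_image_closedBall (𝕜₁ := ℂ) 1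
      have hc' : IsCompact (closure (⇑(adjoint T ∘L T) '' Metric.closedBall 0 1)) := by
        exact hc
      exact hc'.totallyBounded.subset subset_closure
    have hδ : (0:ℝ) < ε^2/8 := by positivity
    obtain ⟨t, hts, htf, hcov⟩ := Metric.finite_approx_of_totallyBounded hS _ hδ
    set pick : E → E := fun y => if h : ∃ x' ∈ Metric.closedBall (0:E) 1,
        (adjoint T ∘L T) x' = y then h.choose else 0 with hpickdef
    refine ⟨(fun y => T (pick y)) '' t, htf.image _, ?_⟩
    rintro _ ⟨x, hx, rfl⟩
    have hmem : (adjoint T ∘L T) x ∈ ⇑(adjoint T ∘L T) '' Metric.closedBall 0 1 :=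
      ⟨x, hx, rfl⟩
    obtain ⟨y, hyt, hy⟩ := Set.mem_iUnion₂.1 (hcov hmem)
    have hex : ∃ x' ∈ Metric.closedBall (0:E) 1, (adjoint T ∘L T) x' = y := by
      obtain ⟨x', hx', rfl⟩ := hts hyt
      exact ⟨x', hx', rfl⟩
    have hpick : pick y = hex.choose := dif_pos hex
    obtain ⟨hx₀B, hx₀eq⟩ := hex.choose_spec
    set x₀ := hex.choose
    refine Set.mem_iUnion₂.2 ⟨T (pick y), Set.mem_image_of_mem _ hyt, ?_⟩
    rw [Metric.mem_ball, hpick]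
    have hnorm2 : ‖T x - T x₀‖^2 ≤ 2 * (ε^2/8) := by
      have h1 : ‖T x - T x₀‖^2 = RCLike.re (⟪(adjoint T ∘L T) (x - x₀), x - x₀⟫_ℂ) := by
        rw [coe_comp', Function.comp_apply, adjoint_inner_left, ← map_sub,
          inner_self_eq_norm_sq]
      rw [h1]
      calc RCLike.re (⟪(adjoint T ∘L T) (x - x₀), x - x₀⟫_ℂ)
          ≤ ‖(adjoint T ∘L T) (x - x₀)‖ * ‖x - x₀‖ := re_inner_le_norm _ _
        _ ≤ (ε^2/8) * 2 := by
            apply mul_le_mul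
            · have heq : (adjoint T ∘L T) (x - x₀) = (adjoint T ∘L T) x - y := by
                rw [map_sub, hx₀eq]
              rw [heq]
              exact le_of_lt (by simpa [dist_eq_norm] using hy)
            · have hx' : ‖x‖ ≤ 1 := by simpa using hx
              have hx₀' : ‖x₀‖ ≤ 1 := by simpa using hx₀B
              calc ‖x - x₀‖ ≤ ‖x‖ + ‖x₀‖ := norm_sub_le _ _
                _ ≤ 2 := by linarith
            · exact norm_nonneg _
            · positivity
        _ = 2 * (ε^2/8) := by ring
    have hsq : ‖T x - T x₀‖^2 ≤ (ε/2)^2 := by nlinarith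
    have hle : ‖T x - T x₀‖ ≤ ε/2 := by
      have := Real.sqrt_le_sqrt hsq
      rwa [Real.sqrt_sq (norm_nonneg _), Real.sqrt_sq (by positivity)] at this
    rw [dist_eq_norm]
    linarith
  have hcl : IsCompact (closure (⇑T '' Metric.closedBall 0 1)) :=
    TotallyBounded.isCompact_of_isClosed key.closure isClosed_closure
  have h2 : IsCompactOperator ⇑(T : E →ₗ[ℂ] F) :=
    (isCompactOperator_iff_isCompact_closure_image_closedBall (𝕜₁ := ℂ)
      (f := (T : E →ₗ[ℂ] F)) one_pos).2 (by simpa using hcl)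
  simpa using h2

lemma cpt_adjoint {T : E →L[ℂ] F} (h : IsCompactOperator ⇑T) :
    IsCompactOperator ⇑(adjoint T) := by
  apply cpt_of_adjoint_comp
  rw [adjoint_adjoint]
  exact cpt_compR h (adjoint T)

end Toolkit
section Toolkit2

variable {E F G G' : Type*}
  [NormedAddCommGroup E] [InnerProductSpace ℂ E] [CompleteSpace E]
  [NormedAddCommGroup F] [InnerProductSpace ℂ F] [CompleteSpace F]
  [NormedAddCommGroup G] [InnerProductSpace ℂ G] [CompleteSpace G]
  [NormedAddCommGroup G'] [InnerProductSpace ℂ G'] [CompleteSpace G']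

lemma cpt_of_comp_adjoint (T : E →L[ℂ] F) (h : IsCompactOperator ⇑(T ∘L adjoint T)) :
    IsCompactOperator ⇑T := by
  have h1 : IsCompactOperator ⇑(adjoint T) := by
    apply cpt_of_adjoint_comp
    rwa [adjoint_adjoint]
  have := cpt_adjoint h1
  rwa [adjoint_adjoint] at this

/-- `A` and `B` agree modulo compact operators. -/
def CEq (A B : E →L[ℂ] F) : Prop := IsCompactOperator ⇑(A - B)

lemma ceq_of_eq {A B : E →L[ℂ] F} (h : A = B) : CEq A B := by
  unfold CEq
  rw [h, sub_self]
  exact isCompactOperator_zero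

lemma CEq.rfl {A : E →L[ℂ] F} : CEq A A := ceq_of_eq (Eq.refl A)

lemma CEq.symm {A B : E →L[ℂ] F} (h : CEq A B) : CEq B A := by
  have := cpt_neg h
  unfold CEq
  rwa [neg_sub] at this

lemma CEq.trans {A B C : E →L[ℂ] F} (h1 : CEq A B) (h2 : CEq B C) : CEq A C := by
  have := cpt_add h1 h2
  unfold CEq
  rwa [sub_add_sub_cancel] at this

lemma CEq.compL {A B : E →L[ℂ] F} (C : F →L[ℂ] G) (h : CEq A B) :
    CEq (C ∘L A) (C ∘L B) := by
  unfold CEq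
  rw [← comp_sub]
  exact cpt_compL C h

lemma CEq.compR {A B : E →L[ℂ] F} (h : CEq A B) (C : G →L[ℂ] E) :
    CEq (A ∘L C) (B ∘L C) := by
  unfold CEq
  rw [← sub_comp]
  exact cpt_compR h C

lemma CEq.adjoint {A B : E →L[ℂ] F} (h : CEq A B) :
    CEq (ContinuousLinearMap.adjoint A) (ContinuousLinearMap.adjoint B) := by
  unfold CEq
  rw [← map_sub]
  exact cpt_adjoint h

lemma CEq.sub {A B A' B' : E →L[ℂ] F} (h : CEq A B) (h' : CEq A' B') :
    CEq (A - A') (B - B') := by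
  have := cpt_sub h h'
  unfold CEq
  have heq : A - B - (A' - B') = A - A' - (B - B') := by abel
  rwa [heq] at this

lemma CEq.cpt {A B : E →L[ℂ] F} (h : CEq A B) (hB : IsCompactOperator ⇑B) :
    IsCompactOperator ⇑A := by
  have := cpt_add h hB
  rwa [sub_add_cancel] at this

lemma CEq.cpt_zero {A : E →L[ℂ] F} (h : CEq A 0) : IsCompactOperator ⇑A :=
  h.cpt isCompactOperator_zero

lemma cpt_ceq_zero {A : E →L[ℂ] F} (h : IsCompactOperator ⇑A) : CEq A 0 := by
  unfold CEq
  rwa [sub_zero]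

lemma CEq.of_cpt_sub {A B : E →L[ℂ] F} (h : IsCompactOperator ⇑(A - B)) : CEq A B := h

lemma CEq.cpt_sub' {A B : E →L[ℂ] F} (h : CEq A B) : IsCompactOperator ⇑(A - B) := h

end Toolkit2

section Toolkit2b
variable {E F G : Type*}
  [NormedAddCommGroup E] [InnerProductSpace ℂ E] [CompleteSpace E]
  [NormedAddCommGroup F] [InnerProductSpace ℂ F] [CompleteSpace F]
  [NormedAddCommGroup G] [InnerProductSpace ℂ G] [CompleteSpace G]

lemma CEq.comp {A B : F →L[ℂ] G} {A' B' : E →L[ℂ] F} (h : CEq A B) (h' : CEq A' B') :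
    CEq (A ∘L A') (B ∘L B') :=
  (h.compR A').trans (h'.compL B)

end Toolkit2b
section Toolkit3

variable {E : Type*} [NormedAddCommGroup E] [InnerProductSpace ℂ E] [CompleteSpace E]
  (U : Submodule ℂ E) [CompleteSpace U] (hU : IsClosed (U : Set E))

lemma projOf_apply_mem (x : E) : projOf U hU x ∈ U := by
  unfold projOf
  simp [coe_comp']

lemma projOf_eq_self {x : E} (hx : x ∈ U) : projOf U hU x = x := by
  unfold projOf
  simp only [coe_comp', Function.comp_apply, Submodule.coe_subtypeL', Submodule.coe_subtype]
  exact Submodule.starProjection_eq_self_iff.mpr hx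

lemma projOf_idem : projOf U hU ∘L projOf U hU = projOf U hU := by
  ext x
  rw [coe_comp', Function.comp_apply, projOf_eq_self U hU (projOf_apply_mem U hU x)]

lemma adjoint_projOf : ContinuousLinearMap.adjoint (projOf U hU) = projOf U hU := by
  unfold projOf
  exact (isSelfAdjoint_starProjection U).adjoint_eq

lemma clmRestrict_eq (T : E →L[ℂ] E) (h : ∀ x ∈ U, T x ∈ U) :
    clmRestrict T U h = U.orthogonalProjectionOnto ∘L T ∘L U.subtypeL := by
  ext x
  exact (Submodule.starProjection_eq_self_iff.mpr (h x x.2)).symm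

lemma adjoint_clmRestrict (T : E →L[ℂ] E) (h : ∀ x ∈ U, T x ∈ U) :
    ContinuousLinearMap.adjoint (clmRestrict T U h) =
      U.orthogonalProjectionOnto ∘L ContinuousLinearMap.adjoint T ∘L U.subtypeL := by
  rw [clmRestrict_eq U T h, adjoint_comp, adjoint_comp, Submodule.adjoint_subtypeL,
    Submodule.adjoint_orthogonalProjection, comp_assoc]

/-- Push an operator on `U` to the ambient space. -/
noncomputable def ambientOp (A : U →L[ℂ] U) : E →L[ℂ] E :=
  U.subtypeL ∘L A ∘L U.orthogonalProjectionOnto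

lemma ambientOp_comp (A B : U →L[ℂ] U) :
    ambientOp U (A ∘L B) = ambientOp U A ∘L ambientOp U B := by
  ext x
  simp [ambientOp, coe_comp', Submodule.orthogonalProjectionOnto_mem_subspace_eq_self]

lemma ambientOp_sub (A B : U →L[ℂ] U) :
    ambientOp U (A - B) = ambientOp U A - ambientOp U B := by
  ext x
  simp [ambientOp, coe_comp']

lemma ambientOp_conj (B : E →L[ℂ] E) :
    ambientOp U (U.orthogonalProjectionOnto ∘L B ∘L U.subtypeL) =
      (U.subtypeL ∘L U.orthogonalProjectionOnto) ∘L B ∘L (U.subtypeL ∘L U.orthogonalProjectionOnto) := by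
  ext x
  simp [ambientOp, coe_comp']

lemma cpt_of_ambientOp {A : U →L[ℂ] U} (h : IsCompactOperator ⇑(ambientOp U A)) :
    IsCompactOperator ⇑A := by
  have h2 : IsCompactOperator ⇑(U.orthogonalProjectionOnto ∘L ambientOp U A ∘L U.subtypeL) :=
    cpt_compR (cpt_compL (U.orthogonalProjectionOnto) h) U.subtypeL
  have heq : U.orthogonalProjectionOnto ∘L ambientOp U A ∘L U.subtypeL = A := by
    ext x
    simp [ambientOp, coe_comp', Submodule.orthogonalProjectionOnto_mem_subspace_eq_self]
  rwa [heq] at h2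

end Toolkit3
section Toolkit4

variable {E : Type*} [NormedAddCommGroup E] [InnerProductSpace ℂ E] [CompleteSpace E]

lemma ambientOp_conj' (U : Submodule ℂ E) [CompleteSpace U] (hU : IsClosed (U : Set E))
    (B : E →L[ℂ] E) :
    ambientOp U (U.orthogonalProjectionOnto ∘L B ∘L U.subtypeL) =
      projOf U hU ∘L B ∘L projOf U hU := by
  ext x
  simp [ambientOp, projOf, coe_comp']

lemma essNormalOn_of_comm {d : ℕ} (T : Fin d → E →L[ℂ] E) (hT : EssNormal T)
    (U : Submodule ℂ E) (hU : IsClosed (U : Set E)) (hinv : ∀ k, ∀ x ∈ U, T k x ∈ U)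
    (hc : ∀ k, IsCompactOperator ⇑(projOf U hU ∘L T k - T k ∘L projOf U hU)) :
    EssNormalOn T U hU hinv := by
  haveI : CompleteSpace U := hU.completeSpace_coe
  unfold EssNormalOn
  intro j k
  set Q := projOf U hU with hQdef
  have hQsa : ContinuousLinearMap.adjoint Q = Q := adjoint_projOf U hU
  have hq1 : ∀ y : E, Q (Q y) = Q y := fun y =>
    projOf_eq_self U hU (projOf_apply_mem U hU y)
  have hq2 : ∀ (m : Fin d) (y : E), Q (T m (Q y)) = T m (Q y) := fun m y =>
    projOf_eq_self U hU (hinv m _ (projOf_apply_mem U hU y))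
  apply cpt_of_ambientOp U
  beta_reduce
  rw [ambientOp_sub, ambientOp_comp, ambientOp_comp, adjoint_clmRestrict, clmRestrict_eq]
  simp only [ambientOp_conj' U hU]
  -- CEq computations
  have cj : CEq (Q * T j) (T j * Q) := hc j
  have ck : CEq (Q * T k) (T k * Q) := hc k
  have ck' : CEq (Q * ContinuousLinearMap.adjoint (T k))
      (ContinuousLinearMap.adjoint (T k) * Q) := by
    have h1 := ck.adjoint
    have e1 : ContinuousLinearMap.adjoint (Q * T k)
        = ContinuousLinearMap.adjoint (T k) * Q := by
      have := adjoint_comp Q (T k)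
      rw [hQsa] at this
      exact this
    have e2 : ContinuousLinearMap.adjoint (T k * Q)
        = Q * ContinuousLinearMap.adjoint (T k) := by
      have := adjoint_comp (T k) Q
      rw [hQsa] at this
      exact this
    rw [e1, e2] at h1
    exact h1.symm
  have c1 : CEq ((Q * T j) * Q) (T j * Q) := by
    have h1 : CEq ((Q * T j) * Q) ((T j * Q) * Q) := cj.compR Q
    have e1 : (T j * Q) * Q = T j * Q := by
      ext x; simp only [ContinuousLinearMap.mul_apply]; rw [hq1]
    exact h1.trans (ceq_of_eq e1)
  have c2 : CEq ((Q * ContinuousLinearMap.adjoint (T k)) * Q)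
      (ContinuousLinearMap.adjoint (T k) * Q) := by
    have h1 := ck'.compR Q
    have e1 : (ContinuousLinearMap.adjoint (T k) * Q) * Q
        = ContinuousLinearMap.adjoint (T k) * Q := by
      ext x; simp only [ContinuousLinearMap.mul_apply]; rw [hq1]
    exact (h1.trans (ceq_of_eq e1))
  have cG1 : CEq (((Q * T j) * Q) * ((Q * ContinuousLinearMap.adjoint (T k)) * Q))
      ((T j * ContinuousLinearMap.adjoint (T k)) * Q) := by
    have h1 := c1.comp c2
    have e3 : (T j * Q) * (ContinuousLinearMap.adjoint (T k) * Q)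
        = T j * ((Q * ContinuousLinearMap.adjoint (T k)) * Q) := by
      ext x; simp [ContinuousLinearMap.mul_apply]
    have h2 : CEq (T j * ((Q * ContinuousLinearMap.adjoint (T k)) * Q))
        (T j * (ContinuousLinearMap.adjoint (T k) * Q)) := c2.compL (T j)
    have e4 : T j * (ContinuousLinearMap.adjoint (T k) * Q)
        = (T j * ContinuousLinearMap.adjoint (T k)) * Q := by
      ext x; simp [ContinuousLinearMap.mul_apply]
    exact ((h1.trans (ceq_of_eq e3)).trans h2).trans (ceq_of_eq e4)
  have cG2 : CEq (((Q * ContinuousLinearMap.adjoint (T k)) * Q) * ((Q * T j) * Q))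
      ((ContinuousLinearMap.adjoint (T k) * T j) * Q) := by
    have h1 := c2.comp c1
    have e3 : (ContinuousLinearMap.adjoint (T k) * Q) * (T j * Q)
        = (ContinuousLinearMap.adjoint (T k) * T j) * Q := by
      ext x; simp only [ContinuousLinearMap.mul_apply]; rw [hq2 j]
    exact h1.trans (ceq_of_eq e3)
  have hsub : CEq ((((Q * T j) * Q) * ((Q * ContinuousLinearMap.adjoint (T k)) * Q))
      - (((Q * ContinuousLinearMap.adjoint (T k)) * Q) * ((Q * T j) * Q)))
      ((T j * ContinuousLinearMap.adjoint (T k)) * Q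
        - (ContinuousLinearMap.adjoint (T k) * T j) * Q) := cG1.sub cG2
  have hfin : CEq ((T j * ContinuousLinearMap.adjoint (T k)) * Q
        - (ContinuousLinearMap.adjoint (T k) * T j) * Q) 0 := by
    apply cpt_ceq_zero
    have heq : (T j * ContinuousLinearMap.adjoint (T k)) * Q
        - (ContinuousLinearMap.adjoint (T k) * T j) * Q
        = (T j ∘L ContinuousLinearMap.adjoint (T k)
            - ContinuousLinearMap.adjoint (T k) ∘L T j) ∘L Q := by
      ext x; simp [ContinuousLinearMap.mul_apply, coe_comp']
    rw [heq]
    exact cpt_compR (hT j k) Q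
  exact (hsub.trans hfin).cpt_zero

lemma proj_comm_cpt {d : ℕ} (T : Fin d → E →L[ℂ] E) (hT : EssNormal T)
    (U : Submodule ℂ E) (hU : IsClosed (U : Set E)) (hinv : ∀ k, ∀ x ∈ U, T k x ∈ U)
    (hres : EssNormalOn T U hU hinv) (k : Fin d) :
    IsCompactOperator ⇑(projOf U hU ∘L T k - T k ∘L projOf U hU) := by
  haveI : CompleteSpace U := hU.completeSpace_coe
  set Q := projOf U hU with hQdef
  have hQsa : ContinuousLinearMap.adjoint Q = Q := adjoint_projOf U hU
  have hq1 : ∀ y : E, Q (Q y) = Q y := fun y =>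
    projOf_eq_self U hU (projOf_apply_mem U hU y)
  have hq2 : ∀ (m : Fin d) (y : E), Q (T m (Q y)) = T m (Q y) := fun m y =>
    projOf_eq_self U hU (hinv m _ (projOf_apply_mem U hU y))
  set C : E →L[ℂ] E := Q * T k - T k * Q with hCdef
  have hadj : ContinuousLinearMap.adjoint C
      = ContinuousLinearMap.adjoint (T k) * Q - Q * ContinuousLinearMap.adjoint (T k) := by
    rw [hCdef, map_sub]
    have e1 : ContinuousLinearMap.adjoint (Q * T k)
        = ContinuousLinearMap.adjoint (T k) * Q := by
      have := adjoint_comp Q (T k); rw [hQsa] at this; exact this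
    have e2 : ContinuousLinearMap.adjoint (T k * Q)
        = Q * ContinuousLinearMap.adjoint (T k) := by
      have := adjoint_comp (T k) Q; rw [hQsa] at this; exact this
    rw [e1, e2]
  -- ambient of restricted self-commutator is compact
  have h2 : IsCompactOperator ⇑(((Q * T k) * Q) * ((Q * ContinuousLinearMap.adjoint (T k)) * Q)
      - ((Q * ContinuousLinearMap.adjoint (T k)) * Q) * ((Q * T k) * Q)) := by
    have h1 := hres k k
    have hamb : IsCompactOperator ⇑(ambientOp U
        (clmRestrict (T k) U (hinv k) ∘L ContinuousLinearMap.adjoint (clmRestrict (T k) U (hinv k))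
          - ContinuousLinearMap.adjoint (clmRestrict (T k) U (hinv k)) ∘L clmRestrict (T k) U (hinv k))) :=
      cpt_compR (cpt_compL U.subtypeL h1) (U.orthogonalProjectionOnto)
    rw [ambientOp_sub, ambientOp_comp, ambientOp_comp, adjoint_clmRestrict, clmRestrict_eq] at hamb
    simp only [ambientOp_conj' U hU] at hamb
    exact hamb
  have hQDQ : IsCompactOperator ⇑((Q ∘L (T k ∘L ContinuousLinearMap.adjoint (T k)
      - ContinuousLinearMap.adjoint (T k) ∘L T k)) ∘L Q) :=
    cpt_compR (cpt_compL Q (hT k k)) Q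
  have key : C * ContinuousLinearMap.adjoint C
      = (Q ∘L (T k ∘L ContinuousLinearMap.adjoint (T k)
          - ContinuousLinearMap.adjoint (T k) ∘L T k)) ∘L Q
        - (((Q * T k) * Q) * ((Q * ContinuousLinearMap.adjoint (T k)) * Q)
          - ((Q * ContinuousLinearMap.adjoint (T k)) * Q) * ((Q * T k) * Q)) := by
    rw [hadj, hCdef]
    ext x
    simp only [ContinuousLinearMap.mul_apply, coe_comp', Function.comp_apply,
      ContinuousLinearMap.sub_apply, map_sub, hq1, hq2]
    abel
  have hCC : IsCompactOperator ⇑(C * ContinuousLinearMap.adjoint C) := by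
    rw [key]
    exact cpt_sub hQDQ h2
  have hC : IsCompactOperator ⇑C := cpt_of_comp_adjoint C hCC
  exact hC

end Toolkit4
/-- Images and kernels under `∞`-morphisms: if `L` is a homomorphism of essentially
normal Hilbert modules intertwining the adjoints modulo compacts, `M` is a closed
invariant subspace with `L(M)` closed and the restricted tuple on `M` essentially
normal, then (a) `L(M)` is an essentially normal submodule of `K`, (b) `M ∩ ker L`
is an essentially normal submodule of `H`, and (c) `P_M L* Y_k − X_k P_M L*` is
compact for every `k`. -/
theorem stmt8 {H K : Type*}
    [NormedAddCommGroup H] [InnerProductSpace ℂ H] [CompleteSpace H]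
    [NormedAddCommGroup K] [InnerProductSpace ℂ K] [CompleteSpace K]
    {d : ℕ} (X : Fin d → H →L[ℂ] H) (Y : Fin d → K →L[ℂ] K)
    (hXcomm : ∀ j k, X j ∘L X k = X k ∘L X j)
    (hYcomm : ∀ j k, Y j ∘L Y k = Y k ∘L Y j)
    (hXen : EssNormal X) (hYen : EssNormal Y)
    (hXcl : IsClosed ((⨆ k, LinearMap.range (X k : H →ₗ[ℂ] H) : Submodule ℂ H) : Set H))
    (hXfd : FiniteDimensional ℂ ↥((⨆ k, LinearMap.range (X k : H →ₗ[ℂ] H) : Submodule ℂ H)ᗮ))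
    (hYcl : IsClosed ((⨆ k, LinearMap.range (Y k : K →ₗ[ℂ] K) : Submodule ℂ K) : Set K))
    (hYfd : FiniteDimensional ℂ ↥((⨆ k, LinearMap.range (Y k : K →ₗ[ℂ] K) : Submodule ℂ K)ᗮ))
    (L : H →L[ℂ] K)
    (hLmod : ∀ k, L ∘L X k = Y k ∘L L)
    (hLmor : ∀ k, IsCompactOperator ⇑(adjoint L ∘L Y k - X k ∘L adjoint L))
    (M : Submodule ℂ H) (hMc : IsClosed (M : Set H))
    (hMinv : ∀ k, ∀ x ∈ M, X k x ∈ M)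
    (hNc : IsClosed ((Submodule.map (L : H →ₗ[ℂ] K) M : Submodule ℂ K) : Set K))
    (hMen : EssNormalOn X M hMc hMinv) :
    (∃ hNinv : ∀ k, ∀ y ∈ Submodule.map (L : H →ₗ[ℂ] K) M, Y k y ∈ Submodule.map (L : H →ₗ[ℂ] K) M,
        EssNormalOn Y (Submodule.map (L : H →ₗ[ℂ] K) M) hNc hNinv) ∧
    (∃ hKinv : ∀ k, ∀ x ∈ M ⊓ LinearMap.ker (L : H →ₗ[ℂ] K), X k x ∈ M ⊓ LinearMap.ker (L : H →ₗ[ℂ] K),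
        EssNormalOn X (M ⊓ LinearMap.ker (L : H →ₗ[ℂ] K))
          (hMc.inter (ContinuousLinearMap.isClosed_ker L)) hKinv) ∧
    (∀ k, IsCompactOperator
        ⇑(projOf M hMc ∘L adjoint L ∘L Y k - X k ∘L (projOf M hMc ∘L adjoint L))) := by
  classical
  haveI : CompleteSpace M := hMc.completeSpace_coe
  haveI : CompleteSpace (Submodule.map (L : H →ₗ[ℂ] K) M) := hNc.completeSpace_coe
  set P : H →L[ℂ] H := projOf M hMc with hPdef
  -- Step A : the projection onto M commutes with each X k modulo compacts
  have hPcomm : ∀ k, IsCompactOperator ⇑(P ∘L X k - X k ∘L P) := fun k =>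
    proj_comm_cpt X hXen M hMc hMinv hMen k
  have cP : ∀ k, CEq (P ∘L X k) (X k ∘L P) := hPcomm
  have hPsa : ContinuousLinearMap.adjoint P = P := adjoint_projOf M hMc
  have cP' : ∀ k, CEq (P ∘L ContinuousLinearMap.adjoint (X k))
      (ContinuousLinearMap.adjoint (X k) ∘L P) := by
    intro k
    have h1 := (cP k).adjoint
    rw [adjoint_comp, adjoint_comp, hPsa] at h1
    exact h1.symm
  have hpmem : ∀ y : H, P y ∈ M := projOf_apply_mem M hMc
  have hpself : ∀ y : H, y ∈ M → P y = y := fun y hy => projOf_eq_self M hMc hy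
  -- the morphism data, in `CEq` form
  have f5 : ∀ k, CEq (ContinuousLinearMap.adjoint L ∘L Y k)
      (X k ∘L ContinuousLinearMap.adjoint L) := hLmor
  have f5' : ∀ k, CEq (L ∘L ContinuousLinearMap.adjoint (X k))
      (ContinuousLinearMap.adjoint (Y k) ∘L L) := by
    intro k
    have h1 := (f5 k).adjoint
    rw [adjoint_comp, adjoint_comp, adjoint_adjoint] at h1
    exact h1.symm
  -- part (c)
  have partC : ∀ k, IsCompactOperator
      ⇑(projOf M hMc ∘L adjoint L ∘L Y k - X k ∘L (projOf M hMc ∘L adjoint L)) := by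
    intro k
    have h1 : CEq (P ∘L (ContinuousLinearMap.adjoint L ∘L Y k))
        (P ∘L (X k ∘L ContinuousLinearMap.adjoint L)) := (f5 k).compL P
    have e1 : (P ∘L adjoint L) ∘L Y k = P ∘L (ContinuousLinearMap.adjoint L ∘L Y k) := by
      ext x; simp [coe_comp']
    have e2 : P ∘L (X k ∘L ContinuousLinearMap.adjoint L)
        = (P ∘L X k) ∘L ContinuousLinearMap.adjoint L := by
      ext x; simp [coe_comp']
    have h2 : CEq ((P ∘L X k) ∘L ContinuousLinearMap.adjoint L)
        ((X k ∘L P) ∘L ContinuousLinearMap.adjoint L) := (cP k).compR _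
    have e3 : (X k ∘L P) ∘L ContinuousLinearMap.adjoint L = X k ∘L (P ∘L adjoint L) := by
      ext x; simp [coe_comp']
    have : CEq ((P ∘L adjoint L) ∘L Y k) (X k ∘L (P ∘L adjoint L)) :=
      (((ceq_of_eq e1).trans h1).trans ((ceq_of_eq e2).trans h2)).trans (ceq_of_eq e3)
    exact this.cpt_sub'
  -- invariance of the image and the kernel
  have hNinv : ∀ k, ∀ y ∈ Submodule.map (L : H →ₗ[ℂ] K) M, Y k y ∈ Submodule.map (L : H →ₗ[ℂ] K) M := by
    intro k y hy
    obtain ⟨m, hm, rfl⟩ := hy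
    refine ⟨X k m, hMinv k m hm, ?_⟩
    have := DFunLike.congr_fun (hLmod k) m
    simpa [coe_comp'] using this
  have hKinv : ∀ k, ∀ x ∈ M ⊓ LinearMap.ker (L : H →ₗ[ℂ] K), X k x ∈ M ⊓ LinearMap.ker (L : H →ₗ[ℂ] K) := by
    intro k x hx
    obtain ⟨hx1, hx2⟩ := hx
    refine ⟨hMinv k x hx1, ?_⟩
    have := DFunLike.congr_fun (hLmod k) x
    simp only [coe_comp', Function.comp_apply] at this
    have hx2' : L x = 0 := hx2
    show L (X k x) = 0
    rw [this, hx2', map_zero]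
  -- the auxiliary operator `L₁ = L ∘ P` and its partial inverse `V`
  set L₁ : H →L[ℂ] K := L ∘L P with hL₁def
  have hkerc : IsClosed ((LinearMap.ker (L₁ : H →ₗ[ℂ] K) : Submodule ℂ H) : Set H) :=
    ContinuousLinearMap.isClosed_ker L₁
  haveI : CompleteSpace (LinearMap.ker (L₁ : H →ₗ[ℂ] K)) := hkerc.completeSpace_coe
  set Z : Submodule ℂ H := (LinearMap.ker (L₁ : H →ₗ[ℂ] K))ᗮ with hZdef
  have hZc : IsClosed (Z : Set H) := Submodule.isClosed_orthogonal _
  haveI : CompleteSpace Z := hZc.completeSpace_coe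
  have hT0mem : ∀ z : Z, (L₁ ∘L Z.subtypeL) z ∈ Submodule.map (L : H →ₗ[ℂ] K) M := fun z =>
    ⟨P z, hpmem _, rfl⟩
  set T1 : Z →L[ℂ] (Submodule.map (L : H →ₗ[ℂ] K) M) :=
    (L₁ ∘L Z.subtypeL).codRestrict (Submodule.map (L : H →ₗ[ℂ] K) M) hT0mem with hT1def
  have hT1coe : ∀ z : Z, (T1 z : K) = L₁ (z : H) := fun z => rfl
  have hinj : T1.ker = ⊥ := by
    rw [Submodule.eq_bot_iff]
    intro z hz
    have hz0 : L₁ (z : H) = 0 := by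
      have h0 : (T1 z : K) = 0 := by
        rw [show T1 z = 0 from LinearMap.mem_ker.mp hz]; rfl
      rwa [hT1coe] at h0
    have hzk : (z : H) ∈ LinearMap.ker (L₁ : H →ₗ[ℂ] K) := LinearMap.mem_ker.mpr hz0
    have hin : ⟪(z : H), (z : H)⟫_ℂ = 0 :=
      (Submodule.mem_orthogonal _ _).mp z.2 _ hzk
    have : (z : H) = 0 := inner_self_eq_zero.mp hin
    exact Subtype.ext (by simpa using this)
  have hsurj : T1.range = ⊤ := by
    rw [LinearMap.range_eq_top]
    rintro ⟨y, hy⟩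
    obtain ⟨m, hm, hmy⟩ := hy
    obtain ⟨a, ha, b, hb, hab⟩ :=
      Submodule.exists_add_mem_mem_orthogonal (K := LinearMap.ker (L₁ : H →ₗ[ℂ] K)) m
    refine ⟨⟨b, hb⟩, ?_⟩
    apply Subtype.ext
    change (T1 ⟨b, hb⟩ : K) = y
    rw [hT1coe]
    show L₁ b = y
    have h1 : L₁ m = (L : H →ₗ[ℂ] K) m := by
      show L (P m) = L m
      rw [hpself m hm]
    have h2 : L₁ m = L₁ a + L₁ b := by rw [hab, map_add]
    have ha0 : L₁ a = 0 := LinearMap.mem_ker.mp ha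
    rw [← hmy, ← h1, h2, ha0, zero_add]
  set e := ContinuousLinearEquiv.ofBijective T1 hinj hsurj with hedef
  set V : K →L[ℂ] H := Z.subtypeL ∘L
    ((e.symm : (Submodule.map (L : H →ₗ[ℂ] K) M) ≃L[ℂ] Z) : (Submodule.map (L : H →ₗ[ℂ] K) M) →L[ℂ] Z) ∘L
      (Submodule.map (L : H →ₗ[ℂ] K) M).orthogonalProjectionOnto with hVdef
  have fV1 : L₁ ∘L V = projOf (Submodule.map (L : H →ₗ[ℂ] K) M) hNc := by
    ext y
    have h1 : (L₁ ∘L V) y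
        = (T1 (e.symm ((Submodule.map (L : H →ₗ[ℂ] K) M).orthogonalProjectionOnto y)) : K) := rfl
    rw [h1]
    have h2 : T1 (e.symm ((Submodule.map (L : H →ₗ[ℂ] K) M).orthogonalProjectionOnto y))
        = (Submodule.map (L : H →ₗ[ℂ] K) M).orthogonalProjectionOnto y :=
      ContinuousLinearEquiv.ofBijective_apply_symm_apply T1 hinj hsurj _
    rw [h2]; rfl
  have fV2 : V ∘L L₁ = projOf Z hZc := by
    ext x
    obtain ⟨a, ha, b, hb, hab⟩ :=
      Submodule.exists_add_mem_mem_orthogonal (K := LinearMap.ker (L₁ : H →ₗ[ℂ] K)) x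
    have hL1b : L₁ x = L₁ b := by
      rw [hab, map_add, show L₁ a = 0 from LinearMap.mem_ker.mp ha, zero_add]
    have hmemb : L₁ b ∈ Submodule.map (L : H →ₗ[ℂ] K) M := ⟨P b, hpmem _, rfl⟩
    have hproj : (Submodule.map (L : H →ₗ[ℂ] K) M).orthogonalProjectionOnto (L₁ b) = T1 ⟨b, hb⟩ := by
      apply Subtype.ext
      rw [hT1coe]
      exact Submodule.starProjection_eq_self_iff.mpr hmemb
    have hVL : (V ∘L L₁) x = b := by
      show Z.subtypeL (e.symm ((Submodule.map (L : H →ₗ[ℂ] K) M).orthogonalProjectionOnto (L₁ x))) = b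
      rw [hL1b, hproj]
      rw [ContinuousLinearEquiv.ofBijective_symm_apply_apply T1 hinj hsurj ⟨b, hb⟩]
      rfl
    rw [hVL]
    have hxb : x - b ∈ Zᗮ := by
      have : x - b = a := by rw [hab]; abel
      rw [this]
      exact (LinearMap.ker (L₁ : H →ₗ[ℂ] K)).le_orthogonal_orthogonal ha
    exact (Submodule.eq_starProjection_of_mem_orthogonal hb hxb).symm
  -- Step B : the image module
  set Q' : K →L[ℂ] K := projOf (Submodule.map (L : H →ₗ[ℂ] K) M) hNc with hQ'def
  have hQ'sa : ContinuousLinearMap.adjoint Q' = Q' := adjoint_projOf _ hNc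
  have hq'mem : ∀ y, Q' y ∈ Submodule.map (L : H →ₗ[ℂ] K) M := projOf_apply_mem _ hNc
  have hq'self : ∀ y ∈ Submodule.map (L : H →ₗ[ℂ] K) M, Q' y = y := fun y hy => projOf_eq_self _ hNc hy
  have hQ'L1 : ∀ x, Q' (L₁ x) = L₁ x := fun x => hq'self _ ⟨P x, hpmem _, rfl⟩
  have hadj1K : ContinuousLinearMap.adjoint (1 : K →L[ℂ] K) = 1 := by
    rw [ContinuousLinearMap.one_def]; exact adjoint_id
  have hadj1H : ContinuousLinearMap.adjoint (1 : H →L[ℂ] H) = 1 := by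
    rw [ContinuousLinearMap.one_def]; exact adjoint_id
  have b4 : ∀ k, CEq (ContinuousLinearMap.adjoint (Y k) ∘L L₁)
      (L₁ ∘L ContinuousLinearMap.adjoint (X k)) := by
    intro k
    have h1 : CEq ((ContinuousLinearMap.adjoint (Y k) ∘L L) ∘L P)
        ((L ∘L ContinuousLinearMap.adjoint (X k)) ∘L P) := ((f5' k).symm).compR P
    have h2 : CEq (L ∘L (P ∘L ContinuousLinearMap.adjoint (X k)))
        (L ∘L (ContinuousLinearMap.adjoint (X k) ∘L P)) := (cP' k).compL L
    have e0 : ContinuousLinearMap.adjoint (Y k) ∘L L₁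
        = (ContinuousLinearMap.adjoint (Y k) ∘L L) ∘L P := by
      ext x; simp [coe_comp', hL₁def]
    have e1 : (L ∘L ContinuousLinearMap.adjoint (X k)) ∘L P
        = L ∘L (ContinuousLinearMap.adjoint (X k) ∘L P) := by
      ext x; simp [coe_comp']
    have e2 : L ∘L (P ∘L ContinuousLinearMap.adjoint (X k))
        = L₁ ∘L ContinuousLinearMap.adjoint (X k) := by
      ext x; simp [coe_comp', hL₁def]
    exact ((((ceq_of_eq e0).trans h1).trans (ceq_of_eq e1)).trans h2.symm).trans
      (ceq_of_eq e2)
  have cQ' : ∀ k, CEq (Q' ∘L Y k) (Y k ∘L Q') := by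
    intro k
    have hD : IsCompactOperator
        ⇑(((1 : K →L[ℂ] K) - Q') ∘L (ContinuousLinearMap.adjoint (Y k) ∘L Q')) := by
      have e1 : ContinuousLinearMap.adjoint (Y k) ∘L Q'
          = (ContinuousLinearMap.adjoint (Y k) ∘L L₁) ∘L V := by
        rw [← fV1]; ext x; simp [coe_comp']
      have h2 : CEq ((ContinuousLinearMap.adjoint (Y k) ∘L L₁) ∘L V)
          ((L₁ ∘L ContinuousLinearMap.adjoint (X k)) ∘L V) := (b4 k).compR V
      have h3 : CEq (((1 : K →L[ℂ] K) - Q') ∘L (ContinuousLinearMap.adjoint (Y k) ∘L Q'))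
          (((1 : K →L[ℂ] K) - Q') ∘L ((L₁ ∘L ContinuousLinearMap.adjoint (X k)) ∘L V)) :=
        (((ceq_of_eq e1).trans h2).compL _)
      have e3 : ((1 : K →L[ℂ] K) - Q') ∘L ((L₁ ∘L ContinuousLinearMap.adjoint (X k)) ∘L V)
          = 0 := by
        ext x
        simp [coe_comp', ContinuousLinearMap.sub_apply, ContinuousLinearMap.one_apply, hQ'L1]
      exact (h3.trans (ceq_of_eq e3)).cpt_zero
    have hCD : Q' ∘L Y k - Y k ∘L Q' = ContinuousLinearMap.adjoint
        (((1 : K →L[ℂ] K) - Q') ∘L (ContinuousLinearMap.adjoint (Y k) ∘L Q')) := by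
      rw [adjoint_comp, adjoint_comp, adjoint_adjoint, hQ'sa, map_sub, hadj1K, hQ'sa]
      ext x
      simp only [coe_comp', Function.comp_apply, ContinuousLinearMap.sub_apply,
        ContinuousLinearMap.one_apply, map_sub]
      rw [hq'self _ (hNinv k _ (hq'mem x))]
    show IsCompactOperator ⇑(Q' ∘L Y k - Y k ∘L Q')
    rw [hCD]
    exact cpt_adjoint hD
  have partA : EssNormalOn Y (Submodule.map (L : H →ₗ[ℂ] K) M) hNc hNinv :=
    essNormalOn_of_comm Y hYen _ hNc hNinv cQ'
  -- Step C : the kernel module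
  set R : H →L[ℂ] H := projOf Z hZc with hRdef
  have hRsa : ContinuousLinearMap.adjoint R = R := adjoint_projOf _ hZc
  have hR_VL : R = V ∘L L₁ := fV2.symm
  have hL1adj : ContinuousLinearMap.adjoint L₁ = P ∘L ContinuousLinearMap.adjoint L := by
    rw [hL₁def, adjoint_comp, hPsa]
  have hR2 : R = ContinuousLinearMap.adjoint L₁ ∘L ContinuousLinearMap.adjoint V := by
    conv_lhs => rw [← hRsa, hR_VL]
    rw [adjoint_comp]
  have hR2p : ∀ y, R y = ContinuousLinearMap.adjoint L₁ (ContinuousLinearMap.adjoint V y) := by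
    intro y
    conv_lhs => rw [hR2]
    rfl
  have hRadjL1 : ∀ y, R (ContinuousLinearMap.adjoint L₁ y)
      = ContinuousLinearMap.adjoint L₁ y := by
    intro y
    apply projOf_eq_self Z hZc
    rw [hZdef, Submodule.mem_orthogonal]
    intro u hu
    rw [adjoint_inner_right, show L₁ u = 0 from LinearMap.mem_ker.mp hu, inner_zero_left]
  have rX2 : ∀ k, CEq (L₁ ∘L X k) (Y k ∘L L₁) := by
    intro k
    have h1 : CEq (L ∘L (P ∘L X k)) (L ∘L (X k ∘L P)) := (cP k).compL L
    have e1 : L₁ ∘L X k = L ∘L (P ∘L X k) := by ext x; simp [coe_comp', hL₁def]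
    have e2 : L ∘L (X k ∘L P) = Y k ∘L L₁ := by
      ext x
      simp only [coe_comp', Function.comp_apply]
      have hx := DFunLike.congr_fun (hLmod k) (P x)
      simpa [coe_comp', hL₁def] using hx
    exact (ceq_of_eq e1).trans (h1.trans (ceq_of_eq e2))
  have rX1 : ∀ k, CEq (X k ∘L ContinuousLinearMap.adjoint L₁)
      (ContinuousLinearMap.adjoint L₁ ∘L Y k) := by
    intro k
    have h1 : CEq ((X k ∘L P) ∘L ContinuousLinearMap.adjoint L)
        ((P ∘L X k) ∘L ContinuousLinearMap.adjoint L) := ((cP k).symm).compR _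
    have h2 : CEq (P ∘L (ContinuousLinearMap.adjoint L ∘L Y k))
        (P ∘L (X k ∘L ContinuousLinearMap.adjoint L)) := (f5 k).compL P
    have e1 : X k ∘L ContinuousLinearMap.adjoint L₁
        = (X k ∘L P) ∘L ContinuousLinearMap.adjoint L := by
      rw [hL1adj]; ext x; simp [coe_comp']
    have e2 : (P ∘L X k) ∘L ContinuousLinearMap.adjoint L
        = P ∘L (X k ∘L ContinuousLinearMap.adjoint L) := by
      ext x; simp [coe_comp']
    have e3 : P ∘L (ContinuousLinearMap.adjoint L ∘L Y k)
        = ContinuousLinearMap.adjoint L₁ ∘L Y k := by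
      rw [hL1adj]; ext x; simp [coe_comp']
    exact (((ceq_of_eq e1).trans h1).trans ((ceq_of_eq e2).trans h2.symm)).trans
      (ceq_of_eq e3)
  have rXadj1 : ∀ k, CEq
      (ContinuousLinearMap.adjoint (X k) ∘L ContinuousLinearMap.adjoint L₁)
      (ContinuousLinearMap.adjoint L₁ ∘L ContinuousLinearMap.adjoint (Y k)) := by
    intro k
    have h1 := (rX2 k).adjoint
    rw [adjoint_comp L₁ (X k), adjoint_comp (Y k) L₁] at h1
    exact h1
  have t1 : ∀ k, IsCompactOperator
      ⇑((((1 : H →L[ℂ] H) - R) ∘L X k) ∘L R) := by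
    intro k
    have e0 : (((1 : H →L[ℂ] H) - R) ∘L X k) ∘L R
        = (((1 : H →L[ℂ] H) - R) ∘L (X k ∘L ContinuousLinearMap.adjoint L₁)) ∘L
            ContinuousLinearMap.adjoint V := by
      ext x
      simp only [coe_comp', Function.comp_apply, ContinuousLinearMap.sub_apply,
        ContinuousLinearMap.one_apply]
      rw [hR2p x]
    have h1 : CEq ((((1 : H →L[ℂ] H) - R) ∘L (X k ∘L ContinuousLinearMap.adjoint L₁)) ∘L
            ContinuousLinearMap.adjoint V)
        ((((1 : H →L[ℂ] H) - R) ∘L (ContinuousLinearMap.adjoint L₁ ∘L Y k)) ∘L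
            ContinuousLinearMap.adjoint V) := (((rX1 k).compL _).compR _)
    have e1 : (((1 : H →L[ℂ] H) - R) ∘L (ContinuousLinearMap.adjoint L₁ ∘L Y k)) ∘L
        ContinuousLinearMap.adjoint V = 0 := by
      ext x
      simp [coe_comp', ContinuousLinearMap.sub_apply, ContinuousLinearMap.one_apply, hRadjL1]
    exact (((ceq_of_eq e0).trans h1).trans (ceq_of_eq e1)).cpt_zero
  have t2 : ∀ k, IsCompactOperator
      ⇑((((1 : H →L[ℂ] H) - R) ∘L ContinuousLinearMap.adjoint (X k)) ∘L R) := by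
    intro k
    have e0 : (((1 : H →L[ℂ] H) - R) ∘L ContinuousLinearMap.adjoint (X k)) ∘L R
        = (((1 : H →L[ℂ] H) - R) ∘L
            (ContinuousLinearMap.adjoint (X k) ∘L ContinuousLinearMap.adjoint L₁)) ∘L
            ContinuousLinearMap.adjoint V := by
      ext x
      simp only [coe_comp', Function.comp_apply, ContinuousLinearMap.sub_apply,
        ContinuousLinearMap.one_apply]
      rw [hR2p x]
    have h1 : CEq ((((1 : H →L[ℂ] H) - R) ∘L
            (ContinuousLinearMap.adjoint (X k) ∘L ContinuousLinearMap.adjoint L₁)) ∘L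
            ContinuousLinearMap.adjoint V)
        ((((1 : H →L[ℂ] H) - R) ∘L
            (ContinuousLinearMap.adjoint L₁ ∘L ContinuousLinearMap.adjoint (Y k))) ∘L
            ContinuousLinearMap.adjoint V) := (((rXadj1 k).compL _).compR _)
    have e1 : (((1 : H →L[ℂ] H) - R) ∘L
        (ContinuousLinearMap.adjoint L₁ ∘L ContinuousLinearMap.adjoint (Y k))) ∘L
        ContinuousLinearMap.adjoint V = 0 := by
      ext x
      simp [coe_comp', ContinuousLinearMap.sub_apply, ContinuousLinearMap.one_apply, hRadjL1]
    exact (((ceq_of_eq e0).trans h1).trans (ceq_of_eq e1)).cpt_zero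
  have cR : ∀ k, CEq (R ∘L X k) (X k ∘L R) := by
    intro k
    have e : ContinuousLinearMap.adjoint
        ((((1 : H →L[ℂ] H) - R) ∘L ContinuousLinearMap.adjoint (X k)) ∘L R)
        - (((1 : H →L[ℂ] H) - R) ∘L X k) ∘L R = R ∘L X k - X k ∘L R := by
      rw [adjoint_comp, adjoint_comp, adjoint_adjoint, hRsa, map_sub, hadj1H, hRsa]
      ext x
      simp only [coe_comp', Function.comp_apply, ContinuousLinearMap.sub_apply,
        ContinuousLinearMap.one_apply, map_sub]
      abel
    have hs := cpt_sub (cpt_adjoint (t2 k)) (t1 k)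
    show IsCompactOperator ⇑(R ∘L X k - X k ∘L R)
    rw [← e]
    exact hs
  -- the projection onto M ⊓ ker L
  have hMperpKer : Mᗮ ≤ LinearMap.ker (L₁ : H →ₗ[ℂ] K) := by
    intro u hu
    rw [LinearMap.mem_ker]
    show L (P u) = 0
    have h0 : M.orthogonalProjectionOnto u = 0 :=
      Submodule.orthogonalProjectionOnto_apply_of_mem_orthogonal hu
    show L ((M.orthogonalProjectionOnto u : H)) = 0
    rw [h0]
    simp
  have hZleM : Z ≤ M := by
    have h1 : Z ≤ Mᗮᗮ := Submodule.orthogonal_le hMperpKer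
    rwa [Submodule.orthogonal_orthogonal] at h1
  have hL1R : ∀ x, L₁ (R x) = L₁ x := by
    intro x
    have hx : x - R x ∈ Zᗮ := Submodule.sub_starProjection_mem_orthogonal (K := Z) x
    have hZperp : Zᗮ = LinearMap.ker (L₁ : H →ₗ[ℂ] K) := by
      rw [hZdef]
      exact Submodule.orthogonal_orthogonal _
    rw [hZperp] at hx
    have h0 : L₁ (x - R x) = 0 := LinearMap.mem_ker.mp hx
    rw [map_sub, sub_eq_zero] at h0
    exact h0.symm
  have hNNkerL1 : (M ⊓ LinearMap.ker (L : H →ₗ[ℂ] K)) ≤ LinearMap.ker (L₁ : H →ₗ[ℂ] K) := by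
    intro z hz
    rw [LinearMap.mem_ker]
    show L (P z) = 0
    rw [hpself z hz.1]
    exact hz.2
  have c3 : projOf (M ⊓ LinearMap.ker (L : H →ₗ[ℂ] K)) (hMc.inter (ContinuousLinearMap.isClosed_ker L))
      = P - R := by
    haveI : CompleteSpace (M ⊓ LinearMap.ker (L : H →ₗ[ℂ] K) : Submodule ℂ H) :=
      (hMc.inter (ContinuousLinearMap.isClosed_ker L)).completeSpace_coe
    ext x
    have hRxM : R x ∈ M := hZleM (projOf_apply_mem Z hZc x)
    have hv : P x - R x ∈ M ⊓ LinearMap.ker (L : H →ₗ[ℂ] K) := by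
      constructor
      · exact Submodule.sub_mem _ (hpmem x) hRxM
      · show L (P x - R x) = 0
        rw [map_sub]
        have h1 : L (R x) = L₁ (R x) := by
          show L (R x) = L (P (R x))
          rw [hpself _ hRxM]
        rw [h1, hL1R]
        show L (P x) - L (P x) = 0
        exact sub_self _
    have hvo : x - (P x - R x) ∈ (M ⊓ LinearMap.ker (L : H →ₗ[ℂ] K))ᗮ := by
      have h1 : x - P x ∈ Mᗮ := Submodule.sub_starProjection_mem_orthogonal (K := M) x
      have h2 : R x ∈ Z := projOf_apply_mem Z hZc x
      have eE : x - (P x - R x) = (x - P x) + R x := by abel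
      rw [eE]
      apply Submodule.add_mem
      · exact Submodule.orthogonal_le inf_le_left h1
      · exact Submodule.orthogonal_le hNNkerL1 h2
    rw [ContinuousLinearMap.sub_apply]
    exact Submodule.eq_starProjection_of_mem_orthogonal hv hvo
  have cNN : ∀ k, IsCompactOperator
      ⇑(projOf (M ⊓ LinearMap.ker (L : H →ₗ[ℂ] K)) (hMc.inter (ContinuousLinearMap.isClosed_ker L)) ∘L X k
        - X k ∘L projOf (M ⊓ LinearMap.ker (L : H →ₗ[ℂ] K)) (hMc.inter (ContinuousLinearMap.isClosed_ker L))) := by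
    intro k
    rw [c3]
    have e : (P - R) ∘L X k - X k ∘L (P - R)
        = (P ∘L X k - X k ∘L P) - (R ∘L X k - X k ∘L R) := by
      ext x
      simp only [coe_comp', Function.comp_apply, ContinuousLinearMap.sub_apply, map_sub]
      abel
    rw [e]
    exact cpt_sub (cP k) (cR k)
  have partB : EssNormalOn X (M ⊓ LinearMap.ker (L : H →ₗ[ℂ] K))
      (hMc.inter (ContinuousLinearMap.isClosed_ker L)) hKinv :=
    essNormalOn_of_comm X hXen _ _ hKinv cNN
  exact ⟨⟨hNinv, partA⟩, ⟨hKinv, partB⟩, partC⟩
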